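/- arXiv:1701.04598 — 4 statements merged into one kernel-verified Lean document; each statement's English description precedes it below -/
import Mathlib

section
/- Let f : ℝ^d → ℝ^d be locally Lipschitz in the sense that for each R > 0 there is L_R > 0 with |f(x) - f(x̄)| ≤ L_R |x - x̄| whenever |x| ∨ |x̄| ≤ R, where R ↦ L_R is increasing. Fix h > 0 with |f(0)| ≤ h and L_h ≥ 1, and define the modified truncation f_h(x) = f(x) if |x| ≤ h and f_h(x) = (|x|/h) f(h x/|x|) if |x| > h. Then f_h is globally Lipschitz with constant 4 L_h: |f_h(x) - f_h(x̄)| ≤ 4 L_h |x - x̄| for all x, x̄ ∈ ℝ^d. -/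
/-!
Outside the ball, `f_h` is `f` composed with the radial projection `x ↦ (h / ‖x‖) x` onto the
sphere of radius `h`, rescaled by `‖x‖ / h`. For `h ≤ ‖y‖ ≤ ‖x‖` write
`f_h x - f_h y = (‖y‖ / h) (f (h x / ‖x‖) - f (h y / ‖y‖)) + ((‖x‖ - ‖y‖) / h) f (h x / ‖x‖)`.
The radial projection is `2h / ‖x‖`-Lipschitz on such pairs, so the first term is at most
`2 L_h ‖x - y‖`; on the ball `‖f‖ ≤ ‖f 0‖ + L_h h ≤ 2 L_h h`, so the second is at most
`2 L_h ‖x - y‖`. A pair with one point inside the ball and one outside is split at a point where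
the segment between them crosses the sphere.
-/

section RadialExtension

variable {E F : Type*} [NormedAddCommGroup E] [NormedSpace ℝ E] [NormedAddCommGroup F]

theorem norm_div_norm_smul {x : E} {r : ℝ} (hr : 0 ≤ r) (hx : 0 < ‖x‖) :
    ‖(r / ‖x‖) • x‖ = r := by
  rw [norm_smul, Real.norm_of_nonneg (by positivity), div_mul_cancel₀ _ hx.ne']

theorem norm_div_norm_smul_sub_div_norm_smul_le {x y : E} {r : ℝ} (hr : 0 ≤ r)
    (hy : 0 < ‖y‖) (hyx : ‖y‖ ≤ ‖x‖) :
    ‖(r / ‖x‖) • x - (r / ‖y‖) • y‖ ≤ 2 * r / ‖x‖ * ‖x - y‖ := by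
  have hx : 0 < ‖x‖ := hy.trans_le hyx
  have hsplit : (r / ‖x‖) • x - (r / ‖y‖) • y
      = (r / ‖x‖) • (x - y) - (r / ‖y‖ - r / ‖x‖) • y := by module
  have hcoeff : 0 ≤ r / ‖y‖ - r / ‖x‖ := sub_nonneg.2 (div_le_div_of_nonneg_left hr hy hyx)
  calc ‖(r / ‖x‖) • x - (r / ‖y‖) • y‖
      ≤ r / ‖x‖ * ‖x - y‖ + (r / ‖y‖ - r / ‖x‖) * ‖y‖ := by
        rw [hsplit]
        refine (norm_sub_le _ _).trans_eq ?_
        rw [norm_smul, norm_smul, Real.norm_of_nonneg (by positivity),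
          Real.norm_of_nonneg hcoeff]
    _ = r / ‖x‖ * (‖x - y‖ + (‖x‖ - ‖y‖)) := by field_simp
    _ ≤ r / ‖x‖ * (‖x - y‖ + ‖x - y‖) := by gcongr; exact norm_sub_norm_le x y
    _ = 2 * r / ‖x‖ * ‖x - y‖ := by ring

theorem norm_sub_le_of_closedBall_of_le_norm {g : E → F} {r C : ℝ}
    (hin : ∀ x y, ‖x‖ ≤ r → ‖y‖ ≤ r → ‖g x - g y‖ ≤ C * ‖x - y‖)
    (hout : ∀ x y, r ≤ ‖x‖ → r ≤ ‖y‖ → ‖g x - g y‖ ≤ C * ‖x - y‖) (x y : E) :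
    ‖g x - g y‖ ≤ C * ‖x - y‖ := by
  wlog hxy : ‖x‖ ≤ ‖y‖ generalizing x y
  · rw [norm_sub_rev, norm_sub_rev x]
    exact this y x (le_of_not_ge hxy)
  rcases le_or_gt ‖y‖ r with hyr | hry
  · exact hin x y (hxy.trans hyr) hyr
  rcases le_or_gt r ‖x‖ with hrx | hxr
  · exact hout x y hrx hry.le
  obtain ⟨z, hz, hzr⟩ := (convex_segment x y).isPreconnected.intermediate_value
    (left_mem_segment ℝ x y) (right_mem_segment ℝ x y) continuous_norm.continuousOn
    ⟨hxr.le, hry.le⟩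
  calc ‖g x - g y‖ ≤ ‖g x - g z‖ + ‖g z - g y‖ := norm_sub_le_norm_sub_add_norm_sub _ _ _
    _ ≤ C * ‖x - z‖ + C * ‖z - y‖ :=
        add_le_add (hin x z hxr.le hzr.le) (hout z y hzr.ge hry.le)
    _ = C * ‖x - y‖ := by
        simp only [← dist_eq_norm, ← mul_add, dist_add_dist_of_mem_segment hz]

variable [NormedSpace ℝ F]

noncomputable def radialExtension (r : ℝ) (f : E → F) (x : E) : F :=
  if ‖x‖ ≤ r then f x else (‖x‖ / r) • f ((r / ‖x‖) • x)

variable {f : E → F} {r : ℝ}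

theorem radialExtension_of_norm_le {x : E} (hx : ‖x‖ ≤ r) : radialExtension r f x = f x :=
  if_pos hx

theorem radialExtension_of_le_norm {x : E} (hr : 0 < r) (hx : r ≤ ‖x‖) :
    radialExtension r f x = (‖x‖ / r) • f ((r / ‖x‖) • x) := by
  rcases hx.eq_or_lt with rfl | hlt
  · rw [radialExtension_of_norm_le le_rfl, div_self hr.ne', one_smul, one_smul]
  · exact if_neg hlt.not_ge

theorem norm_radialExtension_sub_le_of_le_norm {K M : ℝ} (hr : 0 < r) (hK : 0 ≤ K)
    (hlip : ∀ x y, ‖x‖ = r → ‖y‖ = r → ‖f x - f y‖ ≤ K * ‖x - y‖)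
    (hbound : ∀ x, ‖x‖ = r → ‖f x‖ ≤ M) {x y : E} (hx : r ≤ ‖x‖) (hy : r ≤ ‖y‖) :
    ‖radialExtension r f x - radialExtension r f y‖ ≤ (2 * K + M / r) * ‖x - y‖ := by
  wlog hyx : ‖y‖ ≤ ‖x‖ generalizing x y
  · rw [norm_sub_rev, norm_sub_rev x]
    exact this hy hx (le_of_not_ge hyx)
  have hx0 : 0 < ‖x‖ := hr.trans_le hx
  have hy0 : 0 < ‖y‖ := hr.trans_le hy
  set px := (r / ‖x‖) • x
  set py := (r / ‖y‖) • y
  have hpx : ‖px‖ = r := norm_div_norm_smul hr.le hx0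
  have hpy : ‖py‖ = r := norm_div_norm_smul hr.le hy0
  have hsplit : (‖x‖ / r) • f px - (‖y‖ / r) • f py
      = (‖y‖ / r) • (f px - f py) + ((‖x‖ - ‖y‖) / r) • f px := by module
  have hproj : ‖f px - f py‖ ≤ K * (2 * r / ‖x‖ * ‖x - y‖) :=
    (hlip px py hpx hpy).trans <| by
      gcongr; exact norm_div_norm_smul_sub_div_norm_smul_le hr.le hy0 hyx
  rw [radialExtension_of_le_norm hr hx, radialExtension_of_le_norm hr hy, hsplit]
  calc ‖(‖y‖ / r) • (f px - f py) + ((‖x‖ - ‖y‖) / r) • f px‖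
      ≤ ‖y‖ / r * ‖f px - f py‖ + (‖x‖ - ‖y‖) / r * ‖f px‖ := by
        refine (norm_add_le _ _).trans_eq ?_
        rw [norm_smul, norm_smul, Real.norm_of_nonneg (by positivity),
          Real.norm_of_nonneg (div_nonneg (sub_nonneg.2 hyx) hr.le)]
    _ ≤ ‖y‖ / r * (K * (2 * r / ‖x‖ * ‖x - y‖)) + ‖x - y‖ / r * M := by
        gcongr
        · exact norm_sub_norm_le x y
        · exact hbound px hpx
    _ = 2 * K * (‖y‖ / ‖x‖) * ‖x - y‖ + M / r * ‖x - y‖ := by field_simp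
    _ ≤ 2 * K * 1 * ‖x - y‖ + M / r * ‖x - y‖ := by
        gcongr; exact div_le_one_of_le₀ hyx hx0.le
    _ = (2 * K + M / r) * ‖x - y‖ := by ring

theorem norm_radialExtension_sub_le {K M : ℝ} (hr : 0 < r) (hK : 0 ≤ K) (hM : 0 ≤ M)
    (hlip : ∀ x y, ‖x‖ ≤ r → ‖y‖ ≤ r → ‖f x - f y‖ ≤ K * ‖x - y‖)
    (hbound : ∀ x, ‖x‖ = r → ‖f x‖ ≤ M) (x y : E) :
    ‖radialExtension r f x - radialExtension r f y‖ ≤ (2 * K + M / r) * ‖x - y‖ := by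
  refine norm_sub_le_of_closedBall_of_le_norm (r := r) (fun x y hx hy => ?_)
    (fun x y hx hy => ?_) x y
  · rw [radialExtension_of_norm_le hx, radialExtension_of_norm_le hy]
    refine (hlip x y hx hy).trans ?_
    gcongr
    linarith [div_nonneg hM hr.le]
  · exact norm_radialExtension_sub_le_of_le_norm hr hK
      (fun x y hx hy => hlip x y hx.le hy.le) hbound hx hy

end RadialExtension

theorem stmt_0_general {d : ℕ}
    (f : EuclideanSpace ℝ (Fin d) → EuclideanSpace ℝ (Fin d))
    (L : ℝ → ℝ)
    (hlip : ∀ R > (0:ℝ), ∀ x y : EuclideanSpace ℝ (Fin d),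
      max ‖x‖ ‖y‖ ≤ R → ‖f x - f y‖ ≤ L R * ‖x - y‖)
    (h : ℝ) (hh : 0 < h) (hf0 : ‖f 0‖ ≤ h) (hLh : 1 ≤ L h)
    (fh : EuclideanSpace ℝ (Fin d) → EuclideanSpace ℝ (Fin d))
    (hfh : ∀ x, fh x = if ‖x‖ ≤ h then f x else (‖x‖ / h) • f ((h / ‖x‖) • x)) :
    ∀ x y : EuclideanSpace ℝ (Fin d), ‖fh x - fh y‖ ≤ 4 * L h * ‖x - y‖ := by
  have hfh_eq : fh = radialExtension h f := funext hfh
  have hK : 0 ≤ L h := zero_le_one.trans hLh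
  have hbound : ∀ x : EuclideanSpace ℝ (Fin d), ‖x‖ = h → ‖f x‖ ≤ 2 * L h * h := by
    intro x hx
    have hsub : ‖f x - f 0‖ ≤ L h * h := by
      simpa [hx] using hlip h hh x 0 (by simp [hx, hh.le])
    calc ‖f x‖ ≤ ‖f 0‖ + ‖f x - f 0‖ := norm_le_norm_add_norm_sub' _ _
      _ ≤ h + L h * h := add_le_add hf0 hsub
      _ ≤ 2 * L h * h := by nlinarith
  intro x y
  have hconst : 2 * L h + 2 * L h * h / h = 4 * L h := by field_simp; ring
  simpa only [hfh_eq, hconst] using norm_radialExtension_sub_le hh hK (by positivity)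
    (fun x y hx hy => hlip h hh x y (max_le hx hy)) hbound x y

theorem stmt_0 {d : ℕ}
    (f : EuclideanSpace ℝ (Fin d) → EuclideanSpace ℝ (Fin d))
    (L : ℝ → ℝ)
    (hLpos : ∀ R > (0:ℝ), 0 < L R)
    (hLmono : MonotoneOn L (Set.Ioi (0:ℝ)))
    (hlip : ∀ R > (0:ℝ), ∀ x y : EuclideanSpace ℝ (Fin d),
      max ‖x‖ ‖y‖ ≤ R → ‖f x - f y‖ ≤ L R * ‖x - y‖)
    (h : ℝ) (hh : 0 < h) (hf0 : ‖f 0‖ ≤ h) (hLh : 1 ≤ L h)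
    (fh : EuclideanSpace ℝ (Fin d) → EuclideanSpace ℝ (Fin d))
    (hfh : ∀ x, fh x = if ‖x‖ ≤ h then f x else (‖x‖ / h) • f ((h / ‖x‖) • x)) :
    ∀ x y : EuclideanSpace ℝ (Fin d), ‖fh x - fh y‖ ≤ 4 * L h * ‖x - y‖ :=
  stmt_0_general f L hlip h hh hf0 hLh fh hfh
end

section
/- Let p ∈ [4,6], a ≥ 0, and x ∈ ℝ with a² + x ≥ 0. Then (a² + x)^{p/2} ≤ a^p + (p/2) a^{p-2} x + (p(p-2)/8) a^{p-4} x² + (p(p-2)(p-4)/48) a^{p-6} x³, provided a > 0. -/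
/-!
Substituting `a ^ 2 + x = a ^ 2 * s` reduces the claim to `s ^ q ≤ T(s)` for `q = p / 2 ∈ [2, 3]`,
where `T` is the cubic Taylor polynomial of `s ^ q` at `1`. The difference `T(s) - s ^ q` vanishes
to second order at `1`, and its second derivative `q (q - 1) (1 + (q - 2) (s - 1) - s ^ (q - 2))` is
nonnegative by Bernoulli's inequality, since `0 ≤ q - 2 ≤ 1`. A convex function with a critical
point attains its minimum there, so `T(s) - s ^ q ≥ 0`.
-/

open Set

noncomputable def cubicTaylorGap (q t : ℝ) : ℝ :=
  1 + q * (t - 1) + q * (q - 1) / 2 * (t - 1) ^ 2 + q * (q - 1) * (q - 2) / 6 * (t - 1) ^ 3 - t ^ q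

noncomputable def cubicTaylorGapDeriv (q t : ℝ) : ℝ :=
  q + q * (q - 1) * (t - 1) + q * (q - 1) * (q - 2) / 2 * (t - 1) ^ 2 - q * t ^ (q - 1)

section CubicTaylorGap

variable {q : ℝ}

theorem hasDerivAt_cubicTaylorGap (hq : 1 ≤ q) (t : ℝ) :
    HasDerivAt (cubicTaylorGap q) (cubicTaylorGapDeriv q t) t := by
  have hshift : HasDerivAt (fun t : ℝ ↦ t - 1) 1 t := (hasDerivAt_id t).sub_const 1
  have := ((((hasDerivAt_const t 1).add (hshift.const_mul q)).add
      ((hshift.pow 2).const_mul (q * (q - 1) / 2))).add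
      ((hshift.pow 3).const_mul (q * (q - 1) * (q - 2) / 6))).sub
    (Real.hasDerivAt_rpow_const (p := q) (Or.inr hq))
  refine this.congr_deriv ?_
  simp only [cubicTaylorGapDeriv, Nat.cast_ofNat]
  ring

theorem hasDerivAt_cubicTaylorGapDeriv (hq : 2 ≤ q) (t : ℝ) :
    HasDerivAt (cubicTaylorGapDeriv q) (q * (q - 1) * (1 + (q - 2) * (t - 1) - t ^ (q - 2))) t := by
  have hshift : HasDerivAt (fun t : ℝ ↦ t - 1) 1 t := (hasDerivAt_id t).sub_const 1
  have := (((hasDerivAt_const t q).add (hshift.const_mul (q * (q - 1)))).add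
      ((hshift.pow 2).const_mul (q * (q - 1) * (q - 2) / 2))).sub
    ((Real.hasDerivAt_rpow_const (p := q - 1) (Or.inr (by linarith))).const_mul q)
  refine this.congr_deriv ?_
  simp only [Nat.cast_ofNat]
  ring_nf

theorem convexOn_cubicTaylorGap (hq2 : 2 ≤ q) (hq3 : q ≤ 3) :
    ConvexOn ℝ (Ici 0) (cubicTaylorGap q) := by
  refine convexOn_of_hasDerivWithinAt2_nonneg (convex_Ici 0)
    (fun t _ ↦ (hasDerivAt_cubicTaylorGap (by linarith) t).continuousAt.continuousWithinAt)
    (fun t _ ↦ (hasDerivAt_cubicTaylorGap (by linarith) t).hasDerivWithinAt)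
    (fun t _ ↦ (hasDerivAt_cubicTaylorGapDeriv hq2 t).hasDerivWithinAt) ?_
  rw [interior_Ici]
  intro t ht
  have bernoulli : t ^ (q - 2) ≤ 1 + (q - 2) * (t - 1) := by
    simpa using rpow_one_add_le_one_add_mul_self (s := t - 1) (by linarith [mem_Ioi.mp ht])
      (by linarith) (by linarith)
  exact mul_nonneg (by nlinarith) (by linarith)

theorem rpow_le_cubic_taylor_at_one (hq2 : 2 ≤ q) (hq3 : q ≤ 3) {s : ℝ} (hs : 0 ≤ s) :
    s ^ q ≤ 1 + q * (s - 1) + q * (q - 1) / 2 * (s - 1) ^ 2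
      + q * (q - 1) * (q - 2) / 6 * (s - 1) ^ 3 := by
  have hcrit : derivWithin (cubicTaylorGap q) (Ioi 1) 1 = 0 := by
    rw [(hasDerivAt_cubicTaylorGap (by linarith) 1).hasDerivWithinAt.derivWithin
      (uniqueDiffWithinAt_Ioi 1)]
    simp [cubicTaylorGapDeriv]
  have hmin := (convexOn_cubicTaylorGap hq2 hq3).isMinOn_of_rightDeriv_eq_zero (by simp) hcrit
  have := isMinOn_iff.mp hmin s hs
  norm_num [cubicTaylorGap] at this
  linarith

end CubicTaylorGap

theorem stmt_8 (p a x : ℝ) (hp1 : 4 ≤ p) (hp2 : p ≤ 6)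
    (ha : 0 < a) (hx : 0 ≤ a ^ 2 + x) :
    (a ^ 2 + x) ^ (p / 2) ≤
      a ^ p + p / 2 * a ^ (p - 2) * x + p * (p - 2) / 8 * a ^ (p - 4) * x ^ (2:ℕ)
        + p * (p - 2) * (p - 4) / 48 * a ^ (p - 6) * x ^ (3:ℕ) := by
  have ha2 : 0 < a ^ 2 := by positivity
  set s := 1 + x / a ^ 2
  have hs : 0 ≤ s := by
    have : 0 ≤ (a ^ 2 + x) / a ^ 2 := div_nonneg hx ha2.le
    rwa [add_div, div_self ha2.ne'] at this
  have hsplit : (a ^ 2 + x) ^ (p / 2) = a ^ p * s ^ (p / 2) := by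
    rw [show a ^ 2 + x = a ^ 2 * s by simp only [s]; field_simp, Real.mul_rpow ha2.le hs,
      ← Real.rpow_natCast, ← Real.rpow_mul ha.le]
    ring_nf
  have hpow (c : ℝ) (k : ℕ) (hc : c = 2 * k) : a ^ (p - c) = a ^ p / (a ^ 2) ^ k := by
    rw [Real.rpow_sub ha, hc, ← pow_mul, ← Real.rpow_natCast]
    norm_num
  rw [hsplit, hpow 2 1 (by norm_num), hpow 4 2 (by norm_num), hpow 6 3 (by norm_num)]
  calc a ^ p * s ^ (p / 2)
      ≤ a ^ p * (1 + p / 2 * (s - 1) + p / 2 * (p / 2 - 1) / 2 * (s - 1) ^ 2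
          + p / 2 * (p / 2 - 1) * (p / 2 - 2) / 6 * (s - 1) ^ 3) :=
        mul_le_mul_of_nonneg_left
          (rpow_le_cubic_taylor_at_one (by linarith) (by linarith) hs) (by positivity)
    _ = _ := by
        simp only [s]
        field_simp
        ring
end

section
/- Let f(x) = ax - e^{3x} and g(x) = e^x on ℝ with a > 0. Then there exists H > 0 such that for all x, y ∈ ℝ: (x - y)(f(x) - f(y)) + (3/2)(g(x) - g(y))² ≤ H (x - y)². -/
theorem stmt_14 (a : ℝ) (ha : 0 < a) :
    ∃ H > (0:ℝ), ∀ x y : ℝ,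
      (x - y) * ((a * x - Real.exp (3 * x)) - (a * y - Real.exp (3 * y)))
        + 3 / 2 * (Real.exp x - Real.exp y) ^ 2 ≤ H * (x - y) ^ 2 := by
  refine ⟨a + 1/2, by linarith, ?_⟩
  have key : ∀ x y : ℝ, y ≤ x →
      3/2 * (Real.exp x - Real.exp y)^2 ≤
        (x - y) * (Real.exp (3*x) - Real.exp (3*y)) + 1/2 * (x-y)^2 := by
    intro x y hxy
    have hv : 0 < Real.exp y := Real.exp_pos y
    have hu : 0 < Real.exp x := Real.exp_pos x
    have huv : Real.exp y ≤ Real.exp x := Real.exp_le_exp.2 hxy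
    have h3x : Real.exp (3*x) = (Real.exp x)^3 := by
      rw [show (3:ℝ)*x = x+x+x by ring, Real.exp_add, Real.exp_add]; ring
    have h3y : Real.exp (3*y) = (Real.exp y)^3 := by
      rw [show (3:ℝ)*y = y+y+y by ring, Real.exp_add, Real.exp_add]; ring
    have e1 : (y - x) + 1 ≤ Real.exp (y - x) := Real.add_one_le_exp _
    have e2 : (x - y) + 1 ≤ Real.exp (x - y) := Real.add_one_le_exp _
    have m1 : Real.exp (y - x) * Real.exp x = Real.exp y := by
      rw [← Real.exp_add]; ring_nf
    have m2 : Real.exp (x - y) * Real.exp y = Real.exp x := by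
      rw [← Real.exp_add]; ring_nf
    have h1 : Real.exp x - Real.exp y ≤ Real.exp x * (x - y) := by nlinarith
    have h2 : Real.exp y * (x - y) ≤ Real.exp x - Real.exp y := by nlinarith
    rw [h3x, h3y]
    set u := Real.exp x
    set v := Real.exp y
    have hd : 0 ≤ x - y := by linarith
    have c1 : 0 ≤ (u*(x-y) - (u-v)) * (u^3 - v^3) :=
      mul_nonneg (by linarith) (sub_nonneg.2 (pow_le_pow_left₀ hv.le huv 3))
    have c2 : (u-v)^2 ≤ u^2*(x-y)^2 := by nlinarith
    have c3 : 0 ≤ (u-v)^2*(u-1)^2*(u+1/2) := by positivity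
    have c4 : 0 ≤ (u-v)^2*(u^2*v+u*v^2) := by positivity
    nlinarith [mul_pos hu hu, mul_nonneg hu.le c1, c1, c2, c3, c4]
  intro x y
  rcases le_total y x with h | h
  · nlinarith [key x y h]
  · nlinarith [key y x h]
end

section
/- Let f(x) = x - x³ and g(x) = |x|^{3/2} on ℝ. Then for all x, y ∈ ℝ: (x - y)(f(x) - f(y)) + (3/2)(g(x) - g(y))² ≤ H (x - y)² with H = 13/4 + 81/64. -/
lemma rpow32 (t : ℝ) (ht : 0 ≤ t) : t ^ ((3:ℝ)/2) = Real.sqrt t ^ 3 := by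
  rw [show ((3:ℝ)/2) = (1/2) * (3:ℝ) by norm_num, Real.rpow_mul ht,
    ← Real.sqrt_eq_rpow, ← Real.rpow_natCast (Real.sqrt t) 3]
  norm_num

lemma keyA (u v : ℝ) (hu : 0 ≤ u) (hv : 0 ≤ v) :
    (u^2-v^2)^2*(1-(u^4+u^2*v^2+v^4)) + 3/2*(u^3-v^3)^2
      ≤ (13/4+81/64)*(u^2-v^2)^2 := by
  have h1 : (u^3-v^3)^2 ≤ (u^2-v^2)^2*(u+v)^2 := by
    nlinarith [mul_nonneg (mul_nonneg (sq_nonneg (u-v)) (mul_nonneg hu hv))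
      (by nlinarith [mul_nonneg hu hv, sq_nonneg u, sq_nonneg v] :
        (0:ℝ) ≤ 2*u^2+3*(u*v)+2*v^2)]
  have h2 : (3/2)*(u+v)^2 ≤ 225/64 + (u^4+u^2*v^2+v^4) := by
    nlinarith [sq_nonneg (u-v), sq_nonneg (u^2+v^2-2), sq_nonneg (u^2-v^2)]
  have h3 : (u^2-v^2)^2*((3/2)*(u+v)^2) ≤ (u^2-v^2)^2*(225/64 + (u^4+u^2*v^2+v^4)) :=
    mul_le_mul_of_nonneg_left h2 (sq_nonneg _)
  nlinarith [h1, h3]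

lemma keyB (u v : ℝ) (hu : 0 ≤ u) (hv : 0 ≤ v) :
    (u^2+v^2)^2 - (u^8+u^6*v^2+u^2*v^6+v^8) + 3/2*(u^3-v^3)^2
      ≤ (13/4+81/64)*(u^2+v^2)^2 := by
  nlinarith [mul_nonneg (mul_nonneg hu hv) (mul_nonneg (mul_nonneg hu hv) (mul_nonneg hu hv)),
    mul_nonneg (sq_nonneg (u^2+v^2)) (sq_nonneg (u^2+v^2-3)),
    mul_nonneg (mul_nonneg (sq_nonneg (u-v)) (sq_nonneg (u+v))) (sq_nonneg (u^2+v^2)),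
    mul_nonneg (mul_nonneg hu hv) (sq_nonneg (u-v)),
    sq_nonneg (u*v), mul_nonneg hu hv]

theorem stmt_16 :
    ∀ x y : ℝ,
      (x - y) * ((x - x ^ 3) - (y - y ^ 3))
        + 3 / 2 * (|x| ^ ((3:ℝ)/2) - |y| ^ ((3:ℝ)/2)) ^ 2
      ≤ (13 / 4 + 81 / 64) * (x - y) ^ 2 := by
  intro x y
  set u := Real.sqrt |x| with hudef
  set v := Real.sqrt |y| with hvdef
  have hu : 0 ≤ u := Real.sqrt_nonneg _
  have hv : 0 ≤ v := Real.sqrt_nonneg _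
  have hux : u ^ 2 = |x| := Real.sq_sqrt (abs_nonneg x)
  have hvy : v ^ 2 = |y| := Real.sq_sqrt (abs_nonneg y)
  rw [rpow32 |x| (abs_nonneg x), rpow32 |y| (abs_nonneg y), ← hudef, ← hvdef]
  have e1 : x ^ 2 = u ^ 4 := by rw [← sq_abs, ← hux]; ring
  have e2 : y ^ 2 = v ^ 4 := by rw [← sq_abs, ← hvy]; ring
  rcases le_or_gt 0 (x*y) with hxy | hxy
  · have e3 : x * y = u ^ 2 * v ^ 2 := by
      rw [hux, hvy, ← abs_mul, abs_of_nonneg hxy]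
    have e4 : x ^ 3 * y = u ^ 6 * v ^ 2 := by
      rw [show x^3*y = x^2*(x*y) by ring, e1, e3]; ring
    have e5 : x * y ^ 3 = u ^ 2 * v ^ 6 := by
      rw [show x*y^3 = (x*y)*y^2 by ring, e2, e3]; ring
    have e6 : x ^ 4 = u ^ 8 := by rw [show x^4 = (x^2)^2 by ring, e1]; ring
    have e7 : y ^ 4 = v ^ 8 := by rw [show y^4 = (y^2)^2 by ring, e2]; ring
    have hdrift : (x - y) * ((x - x ^ 3) - (y - y ^ 3))
        = (u^2-v^2)^2*(1-(u^4+u^2*v^2+v^4)) := by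
      linear_combination e1 + e2 - 2*e3 - e6 + e4 + e5 - e7
    have hsq : (x - y) ^ 2 = (u^2-v^2)^2 := by linear_combination e1 + e2 - 2*e3
    have := keyA u v hu hv
    linarith [this, hdrift.le, hdrift.ge, hsq.le, hsq.ge]
  · have e3 : x * y = -(u ^ 2 * v ^ 2) := by
      rw [hux, hvy, ← abs_mul, abs_of_nonpos hxy.le]; ring
    have e4 : x ^ 3 * y = -(u ^ 6 * v ^ 2) := by
      rw [show x^3*y = x^2*(x*y) by ring, e1, e3]; ring
    have e5 : x * y ^ 3 = -(u ^ 2 * v ^ 6) := by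
      rw [show x*y^3 = (x*y)*y^2 by ring, e2, e3]; ring
    have e6 : x ^ 4 = u ^ 8 := by rw [show x^4 = (x^2)^2 by ring, e1]; ring
    have e7 : y ^ 4 = v ^ 8 := by rw [show y^4 = (y^2)^2 by ring, e2]; ring
    have hdrift : (x - y) * ((x - x ^ 3) - (y - y ^ 3))
        = (u^2+v^2)^2 - (u^8+u^6*v^2+u^2*v^6+v^8) := by
      linear_combination e1 + e2 - 2*e3 - e6 + e4 + e5 - e7
    have hsq : (x - y) ^ 2 = (u^2+v^2)^2 := by linear_combination e1 + e2 - 2*e3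
    have := keyB u v hu hv
    linarith [this, hdrift.le, hdrift.ge, hsq.le, hsq.ge]
end
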